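/- arXiv:2603.25148 — 3 statements merged into one kernel-verified Lean document; each statement's English description precedes it below -/
import Mathlib

section
/- Let S be a Boolean inverse monoid and φ, ψ ∈ S. Writing E(S)_{ψ,φ} := {p ∈ E(S) : φp = ψp}, one has U_φ ∩ U_ψ = ⋃_{q ∈ E(S)_{ψ,φ}} U_{φq} = U_{φ∧ψ}, where φ∧ψ is the meet of φ and ψ in the canonical order. -/
universe u

namespace BIM

class InverseSemigroup (S : Type u) extends Semigroup S, Inv S where
  mul_inv_mul : ∀ φ : S, φ * φ⁻¹ * φ = φ
  inv_mul_inv : ∀ φ : S, φ⁻¹ * φ * φ⁻¹ = φ⁻¹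
  inv_unique : ∀ φ ψ : S, φ * ψ * φ = φ → ψ * φ * ψ = ψ → ψ = φ⁻¹

variable {S : Type u}

section InvSg
variable [InverseSemigroup S]

def cle (φ ψ : S) : Prop := φ = ψ * φ⁻¹ * φ

lemma mim (φ : S) : φ * φ⁻¹ * φ = φ := InverseSemigroup.mul_inv_mul φ
lemma imi (φ : S) : φ⁻¹ * φ * φ⁻¹ = φ⁻¹ := InverseSemigroup.inv_mul_inv φ

lemma inv_inv' (φ : S) : φ⁻¹⁻¹ = φ :=
  (InverseSemigroup.inv_unique φ⁻¹ φ (imi φ) (mim φ)).symm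

lemma idem_inv {p : S} (hp : p * p = p) : p⁻¹ = p :=
  (InverseSemigroup.inv_unique p p (by rw [hp, hp]) (by rw [hp, hp])).symm

lemma inv_mul_idem (φ : S) : (φ⁻¹ * φ) * (φ⁻¹ * φ) = φ⁻¹ * φ := by
  rw [mul_assoc φ⁻¹ φ (φ⁻¹ * φ), ← mul_assoc φ φ⁻¹ φ, mim]

lemma mul_inv_idem (φ : S) : (φ * φ⁻¹) * (φ * φ⁻¹) = φ * φ⁻¹ := by
  rw [mul_assoc φ φ⁻¹ (φ * φ⁻¹), ← mul_assoc φ⁻¹ φ φ⁻¹, imi]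

lemma idem_absorb {e : S} (he : e * e = e) (x : S) : e * (e * x) = e * x := by
  rw [← mul_assoc, he]

lemma mul_idem {e f : S} (he : e * e = e) (hf : f * f = f) :
    (e * f) * (e * f) = e * f := by
  set a := (e * f)⁻¹ with ha
  have k1 : (e * f) * a * (e * f) = e * f := mim (e * f)
  have k2 : a * (e * f) * a = a := imi (e * f)
  have k2x : ∀ x : S, a * (e * (f * (a * x))) = a * x := by
    intro x
    have := congrArg (· * x) k2
    simp only [mul_assoc] at this
    simpa [mul_assoc] using this
  have hme : (e * f) * (f * (a * e)) * (e * f) = e * f := by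
    have k1' : e * (f * (a * (e * f))) = e * f := by
      simpa [mul_assoc] using k1
    calc (e * f) * (f * (a * e)) * (e * f)
        = e * (f * (f * (a * (e * (e * f))))) := by simp only [mul_assoc]
      _ = e * (f * (a * (e * (e * f)))) := by rw [idem_absorb hf]
      _ = e * (f * (a * (e * f))) := by rw [idem_absorb he]
      _ = e * f := k1'
  have hmh : (f * (a * e)) * (e * f) * (f * (a * e)) = f * (a * e) := by
    calc (f * (a * e)) * (e * f) * (f * (a * e))
        = f * (a * (e * (e * (f * (f * (a * e)))))) := by simp only [mul_assoc]
      _ = f * (a * (e * (f * (f * (a * e))))) := by rw [idem_absorb he]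
      _ = f * (a * (e * (f * (a * e)))) := by rw [idem_absorb hf]
      _ = f * (a * e) := by rw [k2x]
  have hha : f * (a * e) = a := InverseSemigroup.inv_unique (e * f) (f * (a * e)) hme hmh
  have hh : (f * (a * e)) * (f * (a * e)) = f * (a * e) := by
    calc (f * (a * e)) * (f * (a * e))
        = f * (a * (e * (f * (a * e)))) := by simp only [mul_assoc]
      _ = f * (a * e) := by rw [k2x]
  have haa : a * a = a := by rw [← hha]; exact hh
  have hefa : e * f = a := by
    rw [← idem_inv haa, ha, inv_inv']
  rw [hefa]; exact haa

lemma idem_comm {e f : S} (he : e * e = e) (hf : f * f = f) : e * f = f * e := by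
  have hef : (e * f) * (e * f) = e * f := mul_idem he hf
  have hfe : (f * e) * (f * e) = f * e := mul_idem hf he
  have h1 : (e * f) * (f * e) * (e * f) = e * f := by
    calc (e * f) * (f * e) * (e * f)
        = e * (f * (f * (e * (e * f)))) := by simp only [mul_assoc]
      _ = e * (f * (e * (e * f))) := by rw [idem_absorb hf]
      _ = e * (f * (e * f)) := by rw [idem_absorb he]
      _ = (e * f) * (e * f) := by simp only [mul_assoc]
      _ = e * f := hef
  have h2 : (f * e) * (e * f) * (f * e) = f * e := by
    calc (f * e) * (e * f) * (f * e)
        = f * (e * (e * (f * (f * e)))) := by simp only [mul_assoc]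
      _ = f * (e * (f * (f * e))) := by rw [idem_absorb he]
      _ = f * (e * (f * e)) := by rw [idem_absorb hf]
      _ = (f * e) * (f * e) := by simp only [mul_assoc]
      _ = f * e := hfe
  have : f * e = (e * f)⁻¹ := InverseSemigroup.inv_unique (e * f) (f * e) h1 h2
  rw [this, idem_inv hef]

lemma conj_idem (φ : S) {p : S} (hp : p * p = p) :
    (φ⁻¹ * p * φ) * (φ⁻¹ * p * φ) = φ⁻¹ * p * φ := by
  have hcomm : p * (φ * φ⁻¹) = (φ * φ⁻¹) * p := idem_comm hp (mul_inv_idem φ)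
  calc (φ⁻¹ * p * φ) * (φ⁻¹ * p * φ)
      = φ⁻¹ * (p * (φ * φ⁻¹) * (p * φ)) := by simp only [mul_assoc]
    _ = φ⁻¹ * ((φ * φ⁻¹) * p * (p * φ)) := by rw [hcomm]
    _ = φ⁻¹ * (φ * φ⁻¹) * (p * (p * φ)) := by simp only [mul_assoc]
    _ = φ⁻¹ * (φ * φ⁻¹) * (p * φ) := by rw [idem_absorb hp]
    _ = φ⁻¹ * (p * φ) := by rw [← mul_assoc φ⁻¹ φ φ⁻¹, imi]
    _ = φ⁻¹ * p * φ := by rw [mul_assoc]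

lemma cle_idem_iff {p : S} (q : S) (hp : p * p = p) : cle p q ↔ p = q * p := by
  unfold cle
  rw [idem_inv hp, mul_assoc q p p, hp]

end InvSg

class InverseSemigroupWithZero (S : Type u) extends InverseSemigroup S, Zero S where
  zero_mul' : ∀ φ : S, 0 * φ = 0
  mul_zero' : ∀ φ : S, φ * 0 = 0

def orth [InverseSemigroupWithZero S] (φ ψ : S) : Prop := φ * ψ⁻¹ = 0 ∧ φ⁻¹ * ψ = 0

class AdditiveInvSemigroup (S : Type u) extends InverseSemigroupWithZero S where
  vsup : S → S → S
  cle_vsup_left : ∀ φ ψ : S, orth φ ψ → cle φ (vsup φ ψ)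
  cle_vsup_right : ∀ φ ψ : S, orth φ ψ → cle ψ (vsup φ ψ)
  vsup_cle : ∀ φ ψ χ : S, orth φ ψ → cle φ χ → cle ψ χ → cle (vsup φ ψ) χ
  mul_vsup : ∀ φ ψ χ : S, orth φ ψ → χ * vsup φ ψ = vsup (χ * φ) (χ * ψ)
  vsup_mul : ∀ φ ψ χ : S, orth φ ψ → vsup φ ψ * χ = vsup (φ * χ) (ψ * χ)

abbrev E (S : Type u) [Mul S] : Type u := {p : S // p * p = p}

class BooleanInverseMonoid (S : Type u) extends AdditiveInvSemigroup S where
  vinf : S → S → S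
  vinf_cle_left : ∀ φ ψ : S, cle (vinf φ ψ) φ
  vinf_cle_right : ∀ φ ψ : S, cle (vinf φ ψ) ψ
  cle_vinf : ∀ φ ψ χ : S, cle χ φ → cle χ ψ → cle χ (vinf φ ψ)
  ba : BooleanAlgebra (E S)
  ba_le_iff : ∀ p q : E S, (letI := ba; p ≤ q) ↔ cle p.1 q.1

instance (priority := 100) instBAE [BooleanInverseMonoid S] : BooleanAlgebra (E S) :=
  BooleanInverseMonoid.ba

lemma ba_le [BooleanInverseMonoid S] (p q : E S) : p ≤ q ↔ cle p.1 q.1 :=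
  BooleanInverseMonoid.ba_le_iff p q

section BIMsec
variable [BooleanInverseMonoid S]

lemma E_le_iff (p q : E S) : p ≤ q ↔ p.1 = q.1 * p.1 := by
  rw [ba_le]; exact cle_idem_iff q.1 p.2

/-- In `E S`, the Boolean-algebra meet is given by the semigroup product. -/
lemma inf_coe (p q : E S) : ((p ⊓ q : E S) : S) = p.1 * q.1 := by
  have hm : (p.1 * q.1) * (p.1 * q.1) = p.1 * q.1 := mul_idem p.2 q.2
  have h1 : (⟨p.1 * q.1, hm⟩ : E S) ≤ p := by
    rw [E_le_iff]
    show p.1 * q.1 = p.1 * (p.1 * q.1)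
    rw [← mul_assoc, p.2]
  have h2 : (⟨p.1 * q.1, hm⟩ : E S) ≤ q := by
    rw [E_le_iff]
    show p.1 * q.1 = q.1 * (p.1 * q.1)
    rw [← mul_assoc, idem_comm q.2 p.2, mul_assoc, q.2]
  have h3 : p ⊓ q ≤ (⟨p.1 * q.1, hm⟩ : E S) := by
    have hp' : (p ⊓ q : E S).1 = p.1 * (p ⊓ q).1 := (E_le_iff _ _).1 inf_le_left
    have hq' : (p ⊓ q : E S).1 = q.1 * (p ⊓ q).1 := (E_le_iff _ _).1 inf_le_right
    rw [E_le_iff]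
    show (p ⊓ q : E S).1 = p.1 * q.1 * (p ⊓ q).1
    rw [mul_assoc, ← hq', ← hp']
  have : p ⊓ q = (⟨p.1 * q.1, hm⟩ : E S) := le_antisymm h3 (le_inf h1 h2)
  exact congrArg Subtype.val this

/-- A character on `E S`: a Boolean algebra homomorphism into the two-element
Boolean algebra. -/
structure Character (S : Type u) [BooleanInverseMonoid S] where
  toFun : E S → Bool
  map_inf' : ∀ p q : E S, toFun (p ⊓ q) = (toFun p && toFun q)
  map_sup' : ∀ p q : E S, toFun (p ⊔ q) = (toFun p || toFun q)
  map_top' : toFun ⊤ = true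
  map_bot' : toFun ⊥ = false

lemma Character.ext {x y : Character S} (h : ∀ p, x.toFun p = y.toFun p) : x = y := by
  cases x; cases y
  congr 1
  funext p
  exact h p

instance : TopologicalSpace (Character S) :=
  TopologicalSpace.induced (fun x : Character S => x.toFun) inferInstance

/-- `Ê(S)_φ`, the set of characters `x` with `x(φ⁻¹φ) = 1`. -/
def EhatAt (φ : S) : Set (Character S) :=
  {x | x.toFun ⟨φ⁻¹ * φ, inv_mul_idem φ⟩ = true}

/-- `α_φ(x)` as a raw function on idempotents: `p ↦ x(φ⁻¹ p φ)`. -/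
def alphaFun (φ : S) (x : Character S) : E S → Bool :=
  fun p => x.toFun ⟨φ⁻¹ * p.1 * φ, conj_idem φ p.2⟩

/-- The underlying set `S ∗ Ê(S)` of pairs `(φ, x)` with `x ∈ Ê(S)_φ`. -/
abbrev SStar (S : Type u) [BooleanInverseMonoid S] : Type u :=
  {z : S × Character S // z.2 ∈ EhatAt z.1}

/-- The equivalence relation defining `𝒢(S)`. -/
def rel (a b : SStar S) : Prop :=
  a.1.2 = b.1.2 ∧ ∃ p : E S, a.1.2.toFun p = true ∧ a.1.1 * p.1 = b.1.1 * p.1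

lemma rel_equivalence : Equivalence (rel (S := S)) := by
  constructor
  · intro a
    exact ⟨rfl, ⟨⊤, a.1.2.map_top', rfl⟩⟩
  · rintro a b ⟨hxy, p, hp1, hp2⟩
    exact ⟨hxy.symm, p, by rw [← hxy]; exact hp1, hp2.symm⟩
  · rintro a b c ⟨hxy, p, hp1, hp2⟩ ⟨hyz, q, hq1, hq2⟩
    refine ⟨hxy.trans hyz, ⟨⟨p.1 * q.1, mul_idem p.2 q.2⟩, ?_, ?_⟩⟩
    · have : (⟨p.1 * q.1, mul_idem p.2 q.2⟩ : E S) = p ⊓ q :=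
        Subtype.ext (inf_coe p q).symm
      rw [this, a.1.2.map_inf', hp1]
      rw [hxy]
      rw [hq1]
      rfl
    · show a.1.1 * (p.1 * q.1) = c.1.1 * (p.1 * q.1)
      have h1 : a.1.1 * (p.1 * q.1) = b.1.1 * (p.1 * q.1) := by
        rw [← mul_assoc, hp2, mul_assoc]
      have h2 : b.1.1 * (p.1 * q.1) = c.1.1 * (p.1 * q.1) := by
        rw [idem_comm p.2 q.2, ← mul_assoc, hq2, mul_assoc]
      rw [h1, h2]

instance gpdSetoid (S : Type u) [BooleanInverseMonoid S] : Setoid (SStar S) :=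
  ⟨rel, rel_equivalence⟩

/-- The groupoid `𝒢(S)` as a set: the quotient of `S ∗ Ê(S)` by `∼`. -/
def Gpd (S : Type u) [BooleanInverseMonoid S] : Type u := Quotient (gpdSetoid S)

/-- The class `[φ, x]` in `𝒢(S)`. -/
def mk (φ : S) (x : Character S) (hx : x ∈ EhatAt φ) : Gpd S :=
  Quotient.mk (gpdSetoid S) ⟨(φ, x), hx⟩

/-- The basic set `U_φ = {[φ, x] : x ∈ Ê(S)_φ}`. -/
def U (φ : S) : Set (Gpd S) := {g | ∃ (x : Character S) (hx : x ∈ EhatAt φ), g = mk φ x hx}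

/-- The topology on `𝒢(S)` generated by the sets `U_φ`. -/
instance : TopologicalSpace (Gpd S) :=
  TopologicalSpace.generateFrom {V : Set (Gpd S) | ∃ φ : S, V = U φ}

end BIMsec

end BIM


open BIM

section AuxLemmas

variable {S : Type u}

section AuxInvSg
variable [InverseSemigroup S]

lemma aux_mul_inv_rev (a b : S) : (a * b)⁻¹ = b⁻¹ * a⁻¹ := by
  refine (InverseSemigroup.inv_unique (a * b) (b⁻¹ * a⁻¹) ?_ ?_).symm
  · calc (a * b) * (b⁻¹ * a⁻¹) * (a * b)
        = a * ((b * b⁻¹) * (a⁻¹ * a)) * b := by simp only [mul_assoc]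
      _ = a * ((a⁻¹ * a) * (b * b⁻¹)) * b := by
          rw [idem_comm (mul_inv_idem b) (inv_mul_idem a)]
      _ = (a * a⁻¹ * a) * (b * b⁻¹ * b) := by simp only [mul_assoc]
      _ = a * b := by rw [mim, mim]
  · calc (b⁻¹ * a⁻¹) * (a * b) * (b⁻¹ * a⁻¹)
        = b⁻¹ * ((a⁻¹ * a) * (b * b⁻¹)) * a⁻¹ := by simp only [mul_assoc]
      _ = b⁻¹ * ((b * b⁻¹) * (a⁻¹ * a)) * a⁻¹ := by
          rw [idem_comm (inv_mul_idem a) (mul_inv_idem b)]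
      _ = (b⁻¹ * b * b⁻¹) * (a⁻¹ * a * a⁻¹) := by simp only [mul_assoc]
      _ = b⁻¹ * a⁻¹ := by rw [imi, imi]

lemma aux_conj (φ q : S) (hq : q * q = q) :
    (φ * q)⁻¹ * (φ * q) = (φ⁻¹ * φ) * q := by
  rw [aux_mul_inv_rev, idem_inv hq]
  calc (q * φ⁻¹) * (φ * q) = q * (φ⁻¹ * φ) * q := by simp only [mul_assoc]
    _ = (φ⁻¹ * φ) * q * q := by rw [idem_comm hq (inv_mul_idem φ)]
    _ = (φ⁻¹ * φ) * q := by rw [mul_assoc, hq]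

lemma aux_cle_mul (φ q : S) (hq : q * q = q) : cle (φ * q) φ := by
  show φ * q = φ * (φ * q)⁻¹ * (φ * q)
  rw [mul_assoc φ, aux_conj φ q hq]
  calc φ * q = (φ * φ⁻¹ * φ) * q := by rw [mim]
    _ = φ * ((φ⁻¹ * φ) * q) := by simp only [mul_assoc]

lemma aux_cle_mul' (φ ψ q : S) (hq : q * q = q) (h : φ * q = ψ * q) :
    cle (φ * q) ψ := by
  show φ * q = ψ * (φ * q)⁻¹ * (φ * q)
  rw [mul_assoc ψ, aux_conj φ q hq]
  calc φ * q = (φ * φ⁻¹ * φ) * q := by rw [mim]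
    _ = (φ * q) * (φ⁻¹ * φ) := by
        simp only [mul_assoc]
        rw [idem_comm hq (inv_mul_idem φ)]
        simp only [mul_assoc]
    _ = (ψ * q) * (φ⁻¹ * φ) := by rw [h]
    _ = ψ * (q * (φ⁻¹ * φ)) := by rw [mul_assoc]
    _ = ψ * ((φ⁻¹ * φ) * q) := by rw [idem_comm hq (inv_mul_idem φ)]

end AuxInvSg

section AuxBIM
variable [BooleanInverseMonoid S]

lemma aux_char_mono (x : Character S) {p q : E S} (h : p ≤ q)
    (hp : x.toFun p = true) : x.toFun q = true := by
  have h1 : p ⊓ q = p := inf_eq_left.mpr h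
  have h2 := x.map_inf' p q
  rw [h1, hp] at h2
  simpa using h2.symm

lemma aux_mk_eq {φ ψ : S} {x : Character S} (hx : x ∈ EhatAt φ)
    (hy : x ∈ EhatAt ψ) (p : E S) (hp : x.toFun p = true)
    (hpq : φ * p.1 = ψ * p.1) : mk φ x hx = mk ψ x hy :=
  Quotient.sound ⟨rfl, p, hp, hpq⟩

lemma aux_U_subset {φ ψ : S} (h : cle φ ψ) : U φ ⊆ U ψ := by
  rintro g ⟨x, hx, rfl⟩
  have hφψ : φ = ψ * (φ⁻¹ * φ) := by rw [← mul_assoc]; exact h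
  have hle : (⟨φ⁻¹ * φ, inv_mul_idem φ⟩ : E S) ≤ ⟨ψ⁻¹ * ψ, inv_mul_idem ψ⟩ := by
    rw [E_le_iff]
    show φ⁻¹ * φ = (ψ⁻¹ * ψ) * (φ⁻¹ * φ)
    conv_lhs => rw [hφψ]
    exact aux_conj ψ (φ⁻¹ * φ) (inv_mul_idem φ)
  have hx' : x.toFun ⟨φ⁻¹ * φ, inv_mul_idem φ⟩ = true := hx
  have hy : x ∈ EhatAt ψ := aux_char_mono x hle hx'
  refine ⟨x, hy, ?_⟩
  refine aux_mk_eq hx hy ⟨φ⁻¹ * φ, inv_mul_idem φ⟩ hx' ?_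
  rw [← mul_assoc, mim, ← hφψ]

lemma aux_mem_EhatAt_mul {φ : S} {x : Character S} (p : E S)
    (hx : x ∈ EhatAt φ) (hp : x.toFun p = true) : x ∈ EhatAt (φ * p.1) := by
  have hEq : (⟨(φ * p.1)⁻¹ * (φ * p.1), inv_mul_idem (φ * p.1)⟩ : E S)
      = ⟨φ⁻¹ * φ, inv_mul_idem φ⟩ ⊓ p :=
    Subtype.ext (by rw [inf_coe]; exact aux_conj φ p.1 p.2)
  have hx' : x.toFun ⟨φ⁻¹ * φ, inv_mul_idem φ⟩ = true := hx
  show x.toFun ⟨(φ * p.1)⁻¹ * (φ * p.1), inv_mul_idem (φ * p.1)⟩ = true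
  rw [hEq, x.map_inf', hx', hp]
  rfl

end AuxBIM

end AuxLemmas

/-- U_φ ∩ U_ψ = ⋃_{q ∈ E(S)_{ψ,φ}} U_{φq} = U_{φ∧ψ}. -/
theorem stmt7 {S : Type u} [BooleanInverseMonoid S] (φ ψ : S) :
    (U φ ∩ U ψ = ⋃ q ∈ {q : E S | φ * q.1 = ψ * q.1}, U (φ * q.1)) ∧
    (U φ ∩ U ψ = U (BooleanInverseMonoid.vinf φ ψ)) := by
  have key : U φ ∩ U ψ = ⋃ q ∈ {q : E S | φ * q.1 = ψ * q.1}, U (φ * q.1) := by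
    ext g
    simp only [Set.mem_inter_iff, Set.mem_iUnion, Set.mem_setOf_eq]
    constructor
    · rintro ⟨⟨x, hx, rfl⟩, ⟨y, hy, hgy⟩⟩
      obtain ⟨hxy, p, hp1, hp2⟩ := Quotient.exact hgy
      refine ⟨p, hp2, ?_⟩
      have hcond : x ∈ EhatAt (φ * p.1) := aux_mem_EhatAt_mul p hx hp1
      exact ⟨x, hcond, aux_mk_eq hx hcond p hp1 (by rw [mul_assoc, p.2])⟩
    · rintro ⟨q, hq, x, hx, rfl⟩
      have h1 : cle (φ * q.1) φ := aux_cle_mul φ q.1 q.2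
      have h2 : cle (φ * q.1) ψ := aux_cle_mul' φ ψ q.1 q.2 hq
      exact ⟨aux_U_subset h1 ⟨x, hx, rfl⟩, aux_U_subset h2 ⟨x, hx, rfl⟩⟩
  refine ⟨key, ?_⟩
  rw [key]
  set m := BooleanInverseMonoid.vinf φ ψ with hm
  apply Set.Subset.antisymm
  · refine Set.iUnion₂_subset ?_
    intro q hq
    exact aux_U_subset
      (BooleanInverseMonoid.cle_vinf φ ψ (φ * q.1)
        (aux_cle_mul φ q.1 q.2) (aux_cle_mul' φ ψ q.1 q.2 hq))
  · have hm1 : φ * (m⁻¹ * m) = m := by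
      rw [← mul_assoc]
      exact (BooleanInverseMonoid.vinf_cle_left φ ψ).symm
    have hm2 : ψ * (m⁻¹ * m) = m := by
      rw [← mul_assoc]
      exact (BooleanInverseMonoid.vinf_cle_right φ ψ).symm
    have hq : (⟨m⁻¹ * m, inv_mul_idem m⟩ : E S) ∈ {q : E S | φ * q.1 = ψ * q.1} := by
      show φ * (m⁻¹ * m) = ψ * (m⁻¹ * m)
      rw [hm1, hm2]
    intro g hg
    refine Set.mem_iUnion₂.mpr ⟨⟨m⁻¹ * m, inv_mul_idem m⟩, hq, ?_⟩
    show g ∈ U (φ * (m⁻¹ * m))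
    rw [hm1]
    exact hg
end

section
/- Let S be a Boolean inverse monoid and φ, ψ ∈ S. Let φ∖(φ∧ψ) denote the unique element χ' ∈ S with χ' ⊥ (φ∧ψ) and φ = χ' ∨ (φ∧ψ). Then U_φ ∖ U_ψ = U_{φ∖(φ∧ψ)}. -/
universe u

open BIM

namespace BIM

variable {S : Type u}

section Helpers
variable [InverseSemigroup S]

lemma mul_inv_rev' (a b : S) : (a * b)⁻¹ = b⁻¹ * a⁻¹ := by
  have h1 : (a * b) * (b⁻¹ * a⁻¹) * (a * b) = a * b := by
    have hc : (b * b⁻¹) * (a⁻¹ * a) = (a⁻¹ * a) * (b * b⁻¹) :=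
      idem_comm (mul_inv_idem b) (inv_mul_idem a)
    calc (a * b) * (b⁻¹ * a⁻¹) * (a * b)
        = a * ((b * b⁻¹) * (a⁻¹ * a)) * b := by simp only [mul_assoc]
      _ = a * ((a⁻¹ * a) * (b * b⁻¹)) * b := by rw [hc]
      _ = (a * a⁻¹ * a) * (b * b⁻¹ * b) := by simp only [mul_assoc]
      _ = a * b := by rw [mim, mim]
  have h2 : (b⁻¹ * a⁻¹) * (a * b) * (b⁻¹ * a⁻¹) = b⁻¹ * a⁻¹ := by
    have hc : (a⁻¹ * a) * (b * b⁻¹) = (b * b⁻¹) * (a⁻¹ * a) :=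
      idem_comm (inv_mul_idem a) (mul_inv_idem b)
    calc (b⁻¹ * a⁻¹) * (a * b) * (b⁻¹ * a⁻¹)
        = b⁻¹ * ((a⁻¹ * a) * (b * b⁻¹)) * a⁻¹ := by simp only [mul_assoc]
      _ = b⁻¹ * ((b * b⁻¹) * (a⁻¹ * a)) * a⁻¹ := by rw [hc]
      _ = (b⁻¹ * b * b⁻¹) * (a⁻¹ * a * a⁻¹) := by simp only [mul_assoc]
      _ = b⁻¹ * a⁻¹ := by rw [imi, imi]
  exact (InverseSemigroup.inv_unique (a * b) (b⁻¹ * a⁻¹) h1 h2).symm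

lemma cle_refl' (a : S) : cle a a := (mim a).symm

lemma d_eq_of_cle {a b : S} (h : cle a b) : a⁻¹ * a = (b⁻¹ * b) * (a⁻¹ * a) := by
  have e := inv_mul_idem a
  have hinv : a⁻¹ = (a⁻¹ * a) * b⁻¹ := by
    conv_lhs => rw [h]
    rw [mul_inv_rev', mul_inv_rev', inv_inv', ← mul_assoc]
  have key1 : b⁻¹ * a = (b⁻¹ * b) * (a⁻¹ * a) := by
    conv_lhs => rw [h]
    simp only [mul_assoc]
  have key : a⁻¹ * a = ((a⁻¹ * a) * (b⁻¹ * b)) * (a⁻¹ * a) := by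
    conv_lhs => rw [hinv]
    calc ((a⁻¹ * a) * b⁻¹) * a = (a⁻¹ * a) * (b⁻¹ * a) := by simp only [mul_assoc]
      _ = (a⁻¹ * a) * ((b⁻¹ * b) * (a⁻¹ * a)) := by rw [key1]
      _ = ((a⁻¹ * a) * (b⁻¹ * b)) * (a⁻¹ * a) := by simp only [mul_assoc]
  have hc : (a⁻¹ * a) * (b⁻¹ * b) = (b⁻¹ * b) * (a⁻¹ * a) :=
    idem_comm (inv_mul_idem a) (inv_mul_idem b)
  calc a⁻¹ * a = ((a⁻¹ * a) * (b⁻¹ * b)) * (a⁻¹ * a) := key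
    _ = ((b⁻¹ * b) * (a⁻¹ * a)) * (a⁻¹ * a) := by rw [hc]
    _ = (b⁻¹ * b) * ((a⁻¹ * a) * (a⁻¹ * a)) := by simp only [mul_assoc]
    _ = (b⁻¹ * b) * (a⁻¹ * a) := by rw [e]

lemma cle_antisymm' {a b : S} (h1 : cle a b) (h2 : cle b a) : a = b := by
  have he : a⁻¹ * a = (b⁻¹ * b) * (a⁻¹ * a) := d_eq_of_cle h1
  have hf : b⁻¹ * b = (a⁻¹ * a) * (b⁻¹ * b) := d_eq_of_cle h2
  have hc : (a⁻¹ * a) * (b⁻¹ * b) = (b⁻¹ * b) * (a⁻¹ * a) :=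
    idem_comm (inv_mul_idem a) (inv_mul_idem b)
  have hef : a⁻¹ * a = b⁻¹ * b := by rw [he, ← hc, ← hf]
  calc a = b * a⁻¹ * a := h1
    _ = b * (a⁻¹ * a) := by rw [mul_assoc]
    _ = b * (b⁻¹ * b) := by rw [hef]
    _ = b := by rw [← mul_assoc, mim]

end Helpers

section Helpers0
variable [InverseSemigroupWithZero S]

lemma zero_inv' : (0 : S)⁻¹ = 0 :=
  idem_inv (InverseSemigroupWithZero.mul_zero' 0)

lemma cle_zero' (p : S) : cle (0 : S) p := by
  unfold cle
  rw [zero_inv', InverseSemigroupWithZero.mul_zero']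

end Helpers0

section HelpersA
variable [AdditiveInvSemigroup S]

lemma orth_zero' (z : S) : orth z (0 : S) :=
  ⟨by rw [zero_inv', InverseSemigroupWithZero.mul_zero'],
   by rw [InverseSemigroupWithZero.mul_zero']⟩

lemma vsup_zero' (z : S) : AdditiveInvSemigroup.vsup z (0 : S) = z :=
  cle_antisymm'
    (AdditiveInvSemigroup.vsup_cle z 0 z (orth_zero' z) (cle_refl' z) (cle_zero' z))
    (AdditiveInvSemigroup.cle_vsup_left z 0 (orth_zero' z))

end HelpersA

section HelpersB
variable [BooleanInverseMonoid S]

/-- `d(a) = a⁻¹ a` as an element of `E S`. -/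
def dE (a : S) : E S := ⟨a⁻¹ * a, inv_mul_idem a⟩

lemma dE_coe (a : S) : (dE a : E S).1 = a⁻¹ * a := rfl

lemma d_mul_idem (a : S) {p : S} (hp : p * p = p) :
    (a * p)⁻¹ * (a * p) = (a⁻¹ * a) * p := by
  rw [mul_inv_rev', idem_inv hp]
  have hc : p * (a⁻¹ * a) = (a⁻¹ * a) * p := idem_comm hp (inv_mul_idem a)
  calc p * a⁻¹ * (a * p) = p * (a⁻¹ * a) * p := by simp only [mul_assoc]
    _ = (a⁻¹ * a) * p * p := by rw [hc]
    _ = (a⁻¹ * a) * (p * p) := by rw [mul_assoc]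
    _ = (a⁻¹ * a) * p := by rw [hp]

lemma dE_le_of_cle {a b : S} (h : cle a b) : dE a ≤ dE b := by
  rw [E_le_iff]
  exact d_eq_of_cle h

lemma bot_coe' : ((⊥ : E S) : S) = 0 := by
  have h0 : ((0 : S) * 0 = 0) := InverseSemigroupWithZero.mul_zero' 0
  have h : (⟨0, h0⟩ : E S) ≤ ⊥ := by rw [ba_le]; exact cle_zero' _
  have := le_antisymm h bot_le
  exact (congrArg Subtype.val this).symm

lemma char_mono (x : Character S) {p q : E S} (h : p ≤ q)
    (hp : x.toFun p = true) : x.toFun q = true := by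
  have h2 := x.map_inf' p q
  rw [inf_eq_left.mpr h, hp, Bool.true_and] at h2
  exact h2.symm

lemma char_compl (x : Character S) (p : E S) : x.toFun pᶜ = !x.toFun p := by
  have hs := x.map_sup' p pᶜ
  rw [sup_compl_eq_top, x.map_top'] at hs
  have hi := x.map_inf' p pᶜ
  rw [inf_compl_eq_bot, x.map_bot'] at hi
  cases h : x.toFun p
  · rw [h, Bool.false_or] at hs
    rw [Bool.not_false]
    exact hs.symm
  · rw [h, Bool.true_and] at hi
    rw [Bool.not_true]
    exact hi.symm

lemma char_inf (x : Character S) (p q : E S) :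
    x.toFun (p ⊓ q) = (x.toFun p && x.toFun q) := x.map_inf' p q

lemma mk_eq_of {φ ψ : S} (x : Character S) (hx : x ∈ EhatAt φ) (hy : x ∈ EhatAt ψ)
    (p : E S) (hp : x.toFun p = true) (h : φ * p.1 = ψ * p.1) :
    mk φ x hx = mk ψ x hy :=
  Quotient.sound ⟨rfl, p, hp, h⟩

end HelpersB

end BIM

/-- U_φ ∖ U_ψ = U_{φ∖(φ∧ψ)}, where φ∖(φ∧ψ) is the unique χ' with
χ' ⊥ (φ∧ψ) and φ = χ' ∨ (φ∧ψ). -/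
theorem stmt9 {S : Type u} [BooleanInverseMonoid S] (φ ψ χ' : S)
    (h1 : orth χ' (BooleanInverseMonoid.vinf φ ψ))
    (h2 : AdditiveInvSemigroup.vsup χ' (BooleanInverseMonoid.vinf φ ψ) = φ) :
    U φ \ U ψ = U χ' := by
  set τ := BooleanInverseMonoid.vinf φ ψ with hτ
  have hτφ : cle τ φ := BooleanInverseMonoid.vinf_cle_left φ ψ
  have hτψ : cle τ ψ := BooleanInverseMonoid.vinf_cle_right φ ψ
  have hχφ : cle χ' φ := by
    have h := AdditiveInvSemigroup.cle_vsup_left χ' τ h1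
    rwa [h2] at h
  have hφdχ : φ * (χ'⁻¹ * χ') = χ' := by rw [← mul_assoc]; exact hχφ.symm
  have hχdχ : χ' * (χ'⁻¹ * χ') = χ' := by rw [← mul_assoc, mim]
  have hφdτ : φ * (τ⁻¹ * τ) = τ := by rw [← mul_assoc]; exact hτφ.symm
  have hψdτ : ψ * (τ⁻¹ * τ) = τ := by rw [← mul_assoc]; exact hτψ.symm
  have hτdτ : τ * (τ⁻¹ * τ) = τ := by rw [← mul_assoc, mim]
  have hdisU : (dE χ' : E S) ⊓ dE τ = ⊥ := by
    apply Subtype.ext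
    rw [inf_coe, bot_coe', dE_coe, dE_coe]
    calc (χ'⁻¹ * χ') * (τ⁻¹ * τ) = χ'⁻¹ * (χ' * τ⁻¹) * τ := by simp only [mul_assoc]
      _ = χ'⁻¹ * 0 * τ := by rw [h1.1]
      _ = 0 := by
          rw [InverseSemigroupWithZero.mul_zero', InverseSemigroupWithZero.zero_mul']
  ext g
  simp only [Set.mem_diff]
  constructor
  · rintro ⟨⟨x, hx, rfl⟩, hnot⟩
    have hxτ : x.toFun (dE τ) = false := by
      cases h : x.toFun (dE τ)
      · rfl
      · exfalso
        have hxψ : x ∈ EhatAt ψ := char_mono x (dE_le_of_cle hτψ) h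
        exact hnot ⟨x, hxψ, mk_eq_of x hx hxψ (dE τ) h
          (by show φ * (τ⁻¹ * τ) = ψ * (τ⁻¹ * τ); rw [hφdτ, hψdτ])⟩
    set e : E S := dE φ ⊓ (dE τ)ᶜ with he
    have hxe : x.toFun e = true := by
      rw [he, char_inf, char_compl, hxτ]
      have hxφ : x.toFun (dE φ) = true := hx
      rw [hxφ]
      rfl
    have heφ : e.1 = (φ⁻¹ * φ) * e.1 := by
      have := (E_le_iff e (dE φ)).1 inf_le_left
      rwa [dE_coe] at this
    have h0 : (dE τ : E S) ⊓ e = ⊥ := by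
      refine le_bot_iff.mp ?_
      calc (dE τ : E S) ⊓ e ≤ dE τ ⊓ (dE τ)ᶜ := inf_le_inf_left _ inf_le_right
        _ = ⊥ := inf_compl_eq_bot
    have hτe : (τ⁻¹ * τ) * e.1 = 0 := by
      have h' := congrArg Subtype.val h0
      rw [inf_coe, bot_coe', dE_coe] at h'
      exact h'
    have hτe0 : τ * e.1 = 0 := by
      calc τ * e.1 = (τ * (τ⁻¹ * τ)) * e.1 := by rw [hτdτ]
        _ = τ * ((τ⁻¹ * τ) * e.1) := by rw [mul_assoc]
        _ = τ * 0 := by rw [hτe]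
        _ = 0 := InverseSemigroupWithZero.mul_zero' τ
    have hφe : φ * e.1 = χ' * e.1 := by
      have hd := AdditiveInvSemigroup.vsup_mul χ' τ e.1 h1
      rw [h2] at hd
      rw [hd, hτe0, vsup_zero']
    have heχ : e ≤ dE χ' := by
      rw [E_le_iff, dE_coe]
      have h1' : (φ * e.1)⁻¹ * (φ * e.1) = (φ⁻¹ * φ) * e.1 := d_mul_idem φ e.2
      have h2' : (χ' * e.1)⁻¹ * (χ' * e.1) = (χ'⁻¹ * χ') * e.1 := d_mul_idem χ' e.2
      rw [hφe, h2'] at h1'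
      rw [h1']
      exact heφ
    have hxχ : x.toFun (dE χ') = true := char_mono x heχ hxe
    exact ⟨x, hxχ, mk_eq_of x hx hxχ e hxe hφe⟩
  · rintro ⟨x, hx, rfl⟩
    have hxφ : x ∈ EhatAt φ := char_mono x (dE_le_of_cle hχφ) hx
    constructor
    · exact ⟨x, hxφ, mk_eq_of x hx hxφ (dE χ') hx
        (by show χ' * (χ'⁻¹ * χ') = φ * (χ'⁻¹ * χ'); rw [hχdχ, hφdχ])⟩
    · rintro ⟨y, hy, hEq⟩
      obtain ⟨hxy, p, hp, hpe⟩ := Quotient.exact hEq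
      have hpe' : χ' * p.1 = ψ * p.1 := hpe
      have hp' : x.toFun p = true := hp
      set q : E S := dE χ' ⊓ p with hq
      have hq1 : q.1 = (χ'⁻¹ * χ') * p.1 := by
        rw [hq, inf_coe, dE_coe]
      have hxq : x.toFun q = true := by
        rw [hq, char_inf, hp']
        have hx' : x.toFun (dE χ') = true := hx
        rw [hx']
        rfl
      have hdχ : (χ' * p.1)⁻¹ * (χ' * p.1) = (χ'⁻¹ * χ') * p.1 := d_mul_idem χ' p.2
      have hcom : p.1 * (χ'⁻¹ * χ') = (χ'⁻¹ * χ') * p.1 := idem_comm p.2 (inv_mul_idem χ')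
      have hχφ2 : cle (χ' * p.1) φ := by
        show χ' * p.1 = φ * (χ' * p.1)⁻¹ * (χ' * p.1)
        rw [mul_assoc, hdχ, ← mul_assoc, hφdχ]
      have hχψ2 : cle (χ' * p.1) ψ := by
        show χ' * p.1 = ψ * (χ' * p.1)⁻¹ * (χ' * p.1)
        rw [mul_assoc, hdχ, ← hcom, ← mul_assoc, ← hpe', mul_assoc, hcom,
          ← mul_assoc, hχdχ]
      have hχτ : cle (χ' * p.1) τ := BooleanInverseMonoid.cle_vinf φ ψ (χ' * p.1) hχφ2 hχψ2
      have hqτ : q ≤ dE τ := by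
        have hle := dE_le_of_cle hχτ
        have hEq2 : dE (χ' * p.1) = q := Subtype.ext (by rw [hq1]; exact hdχ)
        rwa [hEq2] at hle
      have hqbot : q = ⊥ := by
        refine le_bot_iff.mp ?_
        have := le_inf (inf_le_left : q ≤ dE χ') hqτ
        rwa [hdisU] at this
      rw [hqbot, x.map_bot'] at hxq
      exact Bool.noConfusion hxq
end

section
/- Let S be a Boolean inverse monoid and φ ∈ S. If W is an open subset of 𝒢(S) with W ⊆ U_φ, then there exists an open subset W̃ ⊆ Ê(S)_{φ⁻¹φ} of Ê(S) such that W = {[φ,x] ∈ 𝒢(S) : x ∈ W̃}. -/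
/-! The map `x ↦ [φ, x]` from `Ê(S)_φ` onto `U_φ` is continuous: the preimage of a basic set
`U_ψ` is `Ê(S)_ψ ∩ ⋃ {x(p) = 1 | φ p = ψ p}`, a union of basic open sets of `Ê(S)`. As `Ê(S)_φ`
is itself open in `Ê(S)`, the preimage of an open `W ⊆ U_φ` is open in `Ê(S)`, and `W` is its image.
Finally `Ê(S)_{φ⁻¹φ} = Ê(S)_φ` because `φ⁻¹φ` is an idempotent. -/

universe u

open BIM

namespace BIM

variable {S : Type u} [BooleanInverseMonoid S]

lemma isOpen_setOf_toFun_eq_true (e : E S) : IsOpen {x : Character S | x.toFun e = true} :=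
  ((continuous_apply e).comp continuous_induced_dom :
    Continuous fun x : Character S => x.toFun e).isOpen_preimage {true} (isOpen_discrete _)

lemma isOpen_EhatAt (ψ : S) : IsOpen (EhatAt ψ) :=
  isOpen_setOf_toFun_eq_true _

lemma EhatAt_inv_mul_self (φ : S) : EhatAt (φ⁻¹ * φ) = EhatAt φ := by
  have h : ((φ⁻¹ * φ)⁻¹ * (φ⁻¹ * φ) : S) = φ⁻¹ * φ := by
    rw [idem_inv (inv_mul_idem φ), inv_mul_idem φ]
  ext x
  simp only [EhatAt, Set.mem_ofPred_eq, h]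

lemma mk_mem_U_iff {φ ψ : S} (x : Character S) (hx : x ∈ EhatAt φ) :
    mk φ x hx ∈ U ψ ↔ x ∈ EhatAt ψ ∧ ∃ p : E S, x.toFun p = true ∧ φ * p.1 = ψ * p.1 := by
  constructor
  · rintro ⟨y, hy, hxy⟩
    obtain ⟨rfl, p, hp, hφψ⟩ := Quotient.exact hxy
    exact ⟨hy, p, hp, hφψ⟩
  · rintro ⟨hy, p, hp, hφψ⟩
    exact ⟨x, hy, Quotient.sound ⟨rfl, p, hp, hφψ⟩⟩

lemma continuous_mk (φ : S) : Continuous (fun x : EhatAt φ => mk φ x.1 x.2) := by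
  rw [continuous_generateFrom_iff]
  rintro V ⟨ψ, rfl⟩
  have hpre : (fun x : EhatAt φ => mk φ x.1 x.2) ⁻¹' U ψ = Subtype.val ⁻¹'
      (EhatAt ψ ∩ ⋃ (p : E S) (_ : φ * p.1 = ψ * p.1), {x : Character S | x.toFun p = true}) := by
    ext x
    simp only [Set.mem_preimage, mk_mem_U_iff, Set.mem_inter_iff, Set.mem_iUnion,
      Set.mem_ofPred_eq, exists_prop, and_comm]
  rw [hpre]
  exact continuous_subtype_val.isOpen_preimage _
    ((isOpen_EhatAt ψ).inter (isOpen_iUnion fun p => isOpen_iUnion fun _ =>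
      isOpen_setOf_toFun_eq_true p))

end BIM

/-- If W ⊆ U_φ is open in 𝒢(S), then W = {[φ,x] : x ∈ W̃} for some
open subset W̃ ⊆ Ê(S)_{φ⁻¹φ} of Ê(S). -/
theorem stmt13 {S : Type u} [BooleanInverseMonoid S] (φ : S) (W : Set (Gpd S))
    (hWopen : IsOpen W) (hWsub : W ⊆ U φ) :
    ∃ Wt : Set (Character S), IsOpen Wt ∧ Wt ⊆ EhatAt (φ⁻¹ * φ) ∧
      W = {g : Gpd S | ∃ (x : Character S) (hx : x ∈ EhatAt φ), x ∈ Wt ∧ g = mk φ x hx} := by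
  refine ⟨Subtype.val '' ((fun x : EhatAt φ => mk φ x.1 x.2) ⁻¹' W),
    (isOpen_EhatAt φ).isOpenMap_subtype_val _ ((continuous_mk φ).isOpen_preimage _ hWopen),
    ?_, ?_⟩
  · rw [EhatAt_inv_mul_self]
    exact Subtype.coe_image_subset _ _
  · ext g
    constructor
    · intro hg
      obtain ⟨x, hx, rfl⟩ := hWsub hg
      exact ⟨x, hx, ⟨⟨x, hx⟩, hg, rfl⟩, rfl⟩
    · rintro ⟨_, _, ⟨x, hxW, rfl⟩, rfl⟩
      exact hxW
end
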